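/- The map α is an involution on D_n: if w ∈ D_n, w' ∈ D_n is a conjugate of the mirror w̃ of w (such w' exists and is unique by the Cycle Lemma), and w'' ∈ D_n is a conjugate of the mirror of w', then w'' = w. -/
import Mathlib


/-- The two-letter alphabet {a, b}. -/
inductive Letter : Type
  | a : Letter
  | b : Letter
deriving DecidableEq, BEq, Repr

/-- Words over the alphabet {a, b}. -/
abbrev Word := List Letter

/-- δ(w) = |w|_a − |w|_b. -/
def delta (w : Word) : ℤ := (w.count Letter.a : ℤ) - (w.count Letter.b : ℤ)

/-- A Dyck word: δ(w) = 0 and δ(p) ≥ 0 for every prefix p of w. -/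
def IsDyck (w : Word) : Prop := delta w = 0 ∧ ∀ p : Word, p <+: w → 0 ≤ delta p

/-- Membership in D_n: w = d·b with d a Dyck word of length 2n. -/
def InD (n : ℕ) (w : Word) : Prop :=
  ∃ d : Word, IsDyck d ∧ d.length = 2 * n ∧ w = d ++ [Letter.b]

/-- Exchanging the letters a and b. -/
def Letter.flip : Letter → Letter
  | .a => .b
  | .b => .a

/-- The complement w̄ of a word w. -/
def comp (w : Word) : Word := w.map Letter.flip

/-- Sym(w): the complement of the mirror (reversal) of w. -/
def sym (w : Word) : Word := comp w.reverse

/-- A palindrome: a word equal to its mirror. -/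
def Palindrome (w : Word) : Prop := w.reverse = w

/-- w' is a conjugate of w: w = u·v and w' = v·u. -/
def Conj (w w' : Word) : Prop := ∃ u v : Word, w = u ++ v ∧ w' = v ++ u

/-- u is the principal prefix of w: the shortest prefix of w with δ(u) maximal. -/
def IsPrincipalPrefix (u w : Word) : Prop :=
  u <+: w ∧ (∀ p : Word, p <+: w → delta p ≤ delta u) ∧
    (∀ p : Word, p <+: w → delta p = delta u → u.length ≤ p.length)

/-- The graph of the map γ: writing w = u·v·b with u the principal prefix of w,
    γ(w) = v̄·b·ū. -/
def GammaRel (w w' : Word) : Prop :=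
  ∃ u v : Word, IsPrincipalPrefix u w ∧ w = u ++ v ++ [Letter.b] ∧
    w' = comp v ++ [Letter.b] ++ comp u

/-- F_n: the fixed points of γ in D_n. -/
def InF (n : ℕ) (w : Word) : Prop := InD n w ∧ GammaRel w w

/-- F_γ = ⋃_{n ≥ 1} F_n. -/
def InFgamma (w : Word) : Prop := ∃ n : ℕ, 1 ≤ n ∧ InF n w

/-- x^y: concatenation of the word x with itself y times. -/
def wpow (x : Word) : ℕ → Word
  | 0 => []
  | k + 1 => x ++ wpow x k


lemma delta_append (x y : Word) : delta (x ++ y) = delta x + delta y := by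
  simp [delta, List.count_append]; ring

lemma InD_delta {n : ℕ} {w : Word} (h : InD n w) : delta w = -1 := by
  obtain ⟨d, hd, _, rfl⟩ := h
  rw [delta_append, hd.1]
  simp [delta, List.count_cons]
  decide

lemma InD_prefix {n : ℕ} {w : Word} (h : InD n w) :
    ∀ p : Word, p <+: w → p.length < w.length → 0 ≤ delta p := by
  obtain ⟨d, hd, _, rfl⟩ := h
  intro p hp hl
  have hlen : p.length ≤ d.length := by
    simp at hl; omega
  have hpd : p <+: d :=
    List.prefix_of_prefix_length_le hp (List.prefix_append d [Letter.b]) hlen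
  exact hd.2 p hpd

lemma core_contra (n : ℕ) (z : Word) (k₁ k₂ : ℕ) (h12 : k₁ < k₂) (h2m : k₂ < z.length)
    (m1 : InD n (z.drop k₁ ++ z.take k₁)) (m2 : InD n (z.drop k₂ ++ z.take k₂)) : False := by
  set m := z.length with hm
  have hzd : delta z = -1 := by
    have := InD_delta m1
    rw [delta_append, add_comm, ← delta_append, List.take_append_drop] at this
    exact this
  -- first prefix: (z.drop k₁).take (k₂ - k₁), prefix of w₁
  have hp1 : (z.drop k₁).take (k₂ - k₁) <+: z.drop k₁ ++ z.take k₁ :=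
    (List.take_prefix _ _).trans (List.prefix_append _ _)
  have hl1 : ((z.drop k₁).take (k₂ - k₁)).length < (z.drop k₁ ++ z.take k₁).length := by
    simp [List.length_take, List.length_drop]
    omega
  have hd1 : 0 ≤ delta ((z.drop k₁).take (k₂ - k₁)) := InD_prefix m1 _ hp1 hl1
  have htake : z.take k₂ = z.take k₁ ++ (z.drop k₁).take (k₂ - k₁) := by
    have : k₂ = k₁ + (k₂ - k₁) := by omega
    rw [this, List.take_add, Nat.add_sub_cancel_left]
  have e1 : delta (z.take k₂) = delta (z.take k₁) + delta ((z.drop k₁).take (k₂ - k₁)) := by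
    rw [htake, delta_append]
  -- second prefix: z.drop k₂ ++ z.take k₁, prefix of w₂
  have hpre : z.take k₁ <+: z.take k₂ := by
    have : z.take k₁ = (z.take k₂).take k₁ := by
      rw [List.take_take]; congr 1; omega
    rw [this]; exact List.take_prefix _ _
  have hp2 : z.drop k₂ ++ z.take k₁ <+: z.drop k₂ ++ z.take k₂ := by
    obtain ⟨t, ht⟩ := hpre
    exact ⟨t, by rw [List.append_assoc, ht]⟩
  have hl2 : (z.drop k₂ ++ z.take k₁).length < (z.drop k₂ ++ z.take k₂).length := by
    simp [List.length_take, List.length_drop]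
    omega
  have hd2 : 0 ≤ delta (z.drop k₂ ++ z.take k₁) := InD_prefix m2 _ hp2 hl2
  have e2 : delta (z.drop k₂) = delta z - delta (z.take k₂) := by
    have : delta z = delta (z.take k₂) + delta (z.drop k₂) := by
      rw [← delta_append, List.take_append_drop]
    omega
  rw [delta_append, e2, hzd] at hd2
  omega

lemma conj_rot {z w : Word} (hz : z ≠ []) (h : Conj z w) :
    ∃ k, k < z.length ∧ w = z.drop k ++ z.take k := by
  obtain ⟨u, v, rfl, rfl⟩ := h
  rcases eq_or_ne v [] with rfl | hv
  · exact ⟨0, by simpa [List.length_pos_iff] using hz, by simp⟩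
  · refine ⟨u.length, ?_, ?_⟩
    · have : 0 < v.length := List.length_pos_iff.mpr hv
      simp; omega
    · rw [List.take_left, List.drop_left]

lemma conj_unique {n : ℕ} {z w₁ w₂ : Word} (h1 : Conj z w₁) (h2 : Conj z w₂)
    (m1 : InD n w₁) (m2 : InD n w₂) : w₁ = w₂ := by
  rcases eq_or_ne z [] with rfl | hz
  · obtain ⟨u, v, huv, rfl⟩ := h1
    obtain ⟨u', v', huv', rfl⟩ := h2
    obtain ⟨rfl, rfl⟩ := List.append_eq_nil_iff.mp huv.symm
    obtain ⟨rfl, rfl⟩ := List.append_eq_nil_iff.mp huv'.symm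
    rfl
  · obtain ⟨k₁, hk₁, rfl⟩ := conj_rot hz h1
    obtain ⟨k₂, hk₂, rfl⟩ := conj_rot hz h2
    rcases lt_trichotomy k₁ k₂ with h | h | h
    · exact (core_contra n z k₁ k₂ h hk₂ m1 m2).elim
    · rw [h]
    · exact (core_contra n z k₂ k₁ h hk₁ m2 m1).elim

/-- α is an involution on D_n. -/
theorem alpha_involution (n : ℕ) (w w' w'' : Word)
    (hw : InD n w) (hw' : InD n w') (hw'' : InD n w'')
    (h1 : Conj w.reverse w') (h2 : Conj w'.reverse w'') :
    w'' = w := by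
  -- w is also a conjugate of the reverse of w'
  obtain ⟨u, v, huv, hw'eq⟩ := h1
  have hconj : Conj w'.reverse w := by
    refine ⟨u.reverse, v.reverse, ?_, ?_⟩
    · rw [hw'eq]; simp
    · have : w = w.reverse.reverse := by simp
      rw [this, huv]; simp
  exact conj_unique h2 hconj hw'' hw
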